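/- arXiv:2001.11109 — 6 statements merged into one kernel-verified Lean document; each statement's English description precedes it below -/
import Mathlib

section
/- For α > 0 and k = k₀ := (α+1)·α^(−α/(α+1)), the equation z^(α+1) − k·z^α + 1 = 0 has exactly one solution z in (0,∞), namely z₀ = kα/(α+1) = α^(1/(α+1)). -/
/-!
Put `z₀ = α ^ (1 / (α + 1))`, so that `z₀ ^ (α + 1) = α` and `k = (α + 1) z₀ / α`. Then with
`u = z₀ / z`,
`α (z ^ (α + 1) - k z ^ α + 1) = z ^ (α + 1) (u ^ (α + 1) - 1 - (α + 1) (u - 1))`,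
and by the strict Bernoulli inequality for the exponent `α + 1 > 1` the last factor vanishes
exactly when `u = 1`, i.e. `z = z₀`.
-/

open Real

noncomputable def bernoulliDefect (p u : ℝ) : ℝ := u ^ p - (1 + p * (u - 1))

theorem bernoulliDefect_pos {p u : ℝ} (hp : 1 < p) (hu : 0 ≤ u) (hu₁ : u ≠ 1) :
    0 < bernoulliDefect p u := by
  have h := one_add_mul_self_lt_rpow_one_add (s := u - 1) (by linarith) (sub_ne_zero.2 hu₁) hp
  rw [add_sub_cancel] at h
  exact sub_pos.2 h

theorem bernoulliDefect_eq_zero_iff {p u : ℝ} (hp : 1 < p) (hu : 0 ≤ u) :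
    bernoulliDefect p u = 0 ↔ u = 1 := by
  refine ⟨fun h => ?_, fun h => by simp [bernoulliDefect, h]⟩
  by_contra hu₁
  exact (bernoulliDefect_pos hp hu hu₁).ne' h

theorem rpow_add_one_mul_bernoulliDefect_div {α z w : ℝ} (hz : 0 < z) (hw : 0 ≤ w) :
    z ^ (α + 1) * bernoulliDefect (α + 1) (w / z) =
      w ^ (α + 1) - (α + 1) * w * z ^ α + α * z ^ (α + 1) := by
  have hzα : z ^ (α + 1) = z ^ α * z := by rw [rpow_add hz, rpow_one]
  rw [bernoulliDefect, div_rpow hw hz.le, hzα]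
  field_simp
  ring

theorem rpow_one_div_add_one_rpow_add_one {α : ℝ} (hα : 0 ≤ α) :
    (α ^ (1 / (α + 1))) ^ (α + 1) = α := by
  rw [← rpow_mul hα, one_div_mul_cancel (by linarith), rpow_one]

theorem add_one_mul_rpow_neg_mul_div {α : ℝ} (hα : 0 < α) :
    (α + 1) * α ^ (-(α / (α + 1))) * α / (α + 1) = α ^ (1 / (α + 1)) := by
  have hexp : -(α / (α + 1)) + 1 = 1 / (α + 1) := by field_simp; ring
  rw [← hexp, rpow_add hα, rpow_one]
  field_simp

theorem stmt_2 (α k : ℝ) (hα : 0 < α)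
    (hk : k = (α + 1) * α ^ (-(α / (α + 1)))) :
    k * α / (α + 1) = α ^ (1 / (α + 1)) ∧
    ∀ z : ℝ, 0 < z →
      (z ^ (α + 1) - k * z ^ α + 1 = 0 ↔ z = k * α / (α + 1)) := by
  set z₀ := α ^ (1 / (α + 1))
  have hz₀ : 0 < z₀ := rpow_pos_of_pos hα _
  have hk₀ : k * α / (α + 1) = z₀ := hk ▸ add_one_mul_rpow_neg_mul_div hα
  have hkα : k * α = (α + 1) * z₀ := by
    rw [← hk₀]; field_simp
  refine ⟨hk₀, fun z hz => ?_⟩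
  have key : z ^ (α + 1) * bernoulliDefect (α + 1) (z₀ / z) =
      α * (z ^ (α + 1) - k * z ^ α + 1) := by
    rw [rpow_add_one_mul_bernoulliDefect_div hz hz₀.le, rpow_one_div_add_one_rpow_add_one hα.le]
    linear_combination z ^ α * hkα
  rw [hk₀, ← mul_eq_zero_iff_left hα.ne', ← key,
    mul_eq_zero_iff_left (rpow_pos_of_pos hz _).ne',
    bernoulliDefect_eq_zero_iff (by linarith) (div_pos hz₀ hz).le, div_eq_one_iff_eq hz.ne', eq_comm]
end

section
/- For α > 0 and any k ∈ ℝ, the equation z^(α+1) − k·z^α − 1 = 0 has exactly one solution z in (0,∞). -/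
/-!
Dividing by `z ^ α > 0` turns the equation into `z - z ^ (-α) = k`. The map `z ↦ z - z ^ (-α)`
is continuous and strictly increasing on `(0, ∞)`, tends to `-∞` as `z → 0⁺` (because `α > 0`)
and to `+∞` as `z → ∞`, so it takes every real value `k` exactly once.
-/

open Real Set Filter Topology

lemma rpow_add_one_sub_mul_rpow_sub_one {z : ℝ} (hz : 0 < z) (α k : ℝ) :
    z ^ (α + 1) - k * z ^ α - 1 = z ^ α * (z - z ^ (-α) - k) := by
  have hcancel : z ^ α * z ^ (-α) = 1 := by rw [← rpow_add hz, add_neg_cancel, rpow_zero]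
  rw [rpow_add_one hz.ne', mul_sub, mul_sub, hcancel]
  ring

section SubRpowNeg

variable {α : ℝ}

lemma strictMonoOn_sub_rpow_neg (hα : 0 ≤ α) :
    StrictMonoOn (fun z : ℝ => z - z ^ (-α)) (Ioi 0) := fun x hx y _ hxy => by
  have : y ^ (-α) ≤ x ^ (-α) := rpow_le_rpow_of_nonpos hx hxy.le (neg_nonpos.mpr hα)
  dsimp only
  linarith

lemma continuousOn_sub_rpow_neg (α : ℝ) :
    ContinuousOn (fun z : ℝ => z - z ^ (-α)) (Ioi 0) :=
  continuousOn_id.sub fun z hz => (continuousAt_rpow_const z (-α) (.inl hz.ne')).continuousWithinAt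

lemma tendsto_sub_rpow_neg_nhdsGT_zero (hα : 0 < α) :
    Tendsto (fun z : ℝ => z - z ^ (-α)) (𝓝[>] 0) atBot := by
  simp_rw [sub_eq_add_neg]
  exact (continuousWithinAt_id (x := (0 : ℝ))).tendsto.add_atBot
    (tendsto_neg_atTop_atBot.comp (tendsto_rpow_neg_nhdsGT_zero (neg_neg_of_pos hα)))

lemma tendsto_sub_rpow_neg_atTop (hα : 0 ≤ α) :
    Tendsto (fun z : ℝ => z - z ^ (-α)) atTop atTop := by
  refine tendsto_atTop_mono' _ ?_ (tendsto_atTop_add_const_right _ (-1) tendsto_id)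
  filter_upwards [eventually_ge_atTop 1] with z hz
  have : z ^ (-α) ≤ 1 := rpow_le_one_of_one_le_of_nonpos hz (neg_nonpos.mpr hα)
  dsimp only [id]
  linarith

lemma surjOn_sub_rpow_neg (hα : 0 < α) :
    SurjOn (fun z : ℝ => z - z ^ (-α)) (Ioi 0) univ :=
  (continuousOn_sub_rpow_neg α).surjOn_of_tendsto nonempty_Ioi
    ((tendsto_comp_coe_Ioi_atBot).2 (tendsto_sub_rpow_neg_nhdsGT_zero hα))
    ((tendsto_comp_val_Ioi_atTop).2 (tendsto_sub_rpow_neg_atTop hα.le))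

lemma existsUnique_pos_sub_rpow_neg_eq (hα : 0 < α) (k : ℝ) :
    ∃! z : ℝ, 0 < z ∧ z - z ^ (-α) = k := by
  obtain ⟨z, hz, hzk⟩ := surjOn_sub_rpow_neg hα (mem_univ k)
  exact ⟨z, ⟨hz, hzk⟩, fun y ⟨hy, hyk⟩ =>
    (strictMonoOn_sub_rpow_neg hα.le).injOn hy hz (hyk.trans hzk.symm)⟩

end SubRpowNeg

theorem stmt_3 (α k : ℝ) (hα : 0 < α) :
    ∃! z : ℝ, 0 < z ∧ z ^ (α + 1) - k * z ^ α - 1 = 0 := by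
  refine (existsUnique_congr fun z => and_congr_right fun hz => ?_).mp
    (existsUnique_pos_sub_rpow_neg_eq hα k)
  rw [rpow_add_one_sub_mul_rpow_sub_one hz, mul_eq_zero, sub_eq_zero,
    or_iff_right (rpow_pos_of_pos hz α).ne']
end

section
/- Let α > 0 and k > k₀ := (α+1)·α^(−α/(α+1)), and let z₁ ≤ z₂ be the two positive roots of z^(α+1) − k·z^α + 1 = 0. Then the sequence defined by a₀ = k and a_{n+1} = k − a_n^(−α) is decreasing, bounded below by z₂, and converges to z₂. -/
/-!
The recursion is the iteration of `f x = k - x ^ (-α)`, which is increasing on `(0, ∞)` and whose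
positive fixed points are exactly the positive roots of `z ^ (α + 1) - k * z ^ α + 1 = 0`.
Hence `f` maps `[z₂, ∞)` into itself, and since `f k ≤ k` the orbit of `k` is decreasing and
stays above `z₂`. Its limit is a fixed point `L ≥ z₂`, i.e. a positive root, so `L = z₂` by
maximality of `z₂`.
-/

open Filter Set Function Topology

theorem MonotoneOn.antitone_iterate_of_map_le {β : Type*} [Preorder β] {f : β → β} {s : Set β}
    (hf : MonotoneOn f s) (hs : MapsTo f s s) {x : β} (hx : x ∈ s) (hfx : f x ≤ x) :
    Antitone fun n => f^[n] x := by
  refine antitone_nat_of_succ_le fun n => ?_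
  induction n with
  | zero => exact hfx
  | succ n ih =>
    simpa only [iterate_succ_apply'] using hf (hs.iterate _ hx) (hs.iterate _ hx) ih

theorem exists_isFixedPt_tendsto_iterate_of_antitone {β : Type*}
    [ConditionallyCompleteLinearOrder β] [TopologicalSpace β] [OrderTopology β]
    {f : β → β} {x c : β} (hanti : Antitone fun n => f^[n] x) (hc : ∀ n, c ≤ f^[n] x)
    (hf : ∀ y, c ≤ y → ContinuousAt f y) :
    ∃ L, c ≤ L ∧ IsFixedPt f L ∧ Tendsto (fun n => f^[n] x) atTop (𝓝 L) := by
  have hlim := tendsto_atTop_ciInf hanti ⟨c, by rintro _ ⟨n, rfl⟩; exact hc n⟩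
  have hcL : c ≤ ⨅ n, f^[n] x := le_ciInf hc
  exact ⟨_, hcL, isFixedPt_of_tendsto_iterate hlim (hf _ hcL), hlim⟩

section Recursion

variable {α k : ℝ}

theorem rpow_add_one_sub_mul_rpow_add_one_eq_zero_iff {z : ℝ} (hz : 0 < z) :
    z ^ (α + 1) - k * z ^ α + 1 = 0 ↔ k - z ^ (-α) = z := by
  rw [Real.rpow_add_one hz.ne', Real.rpow_neg hz.le]
  constructor <;> intro h <;> field_simp at h ⊢ <;> linarith

theorem monotoneOn_const_sub_rpow_neg (hα : 0 ≤ α) :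
    MonotoneOn (fun x : ℝ => k - x ^ (-α)) (Ioi 0) := fun _ hx _ _ hxy =>
  sub_le_sub_left (Real.rpow_le_rpow_of_nonpos hx hxy (neg_nonpos.2 hα)) k

theorem continuousAt_const_sub_rpow_neg {x : ℝ} (hx : x ≠ 0) :
    ContinuousAt (fun x : ℝ => k - x ^ (-α)) x :=
  continuousAt_const.sub (Real.continuousAt_rpow_const x _ (Or.inl hx))

end Recursion

theorem stmt_7_general (α k z₂ : ℝ) (hα : 0 < α)
    (hz₂pos : 0 < z₂) (hz₂root : z₂ ^ (α + 1) - k * z₂ ^ α + 1 = 0)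
    (hz₂max : ∀ z : ℝ, 0 < z → z ^ (α + 1) - k * z ^ α + 1 = 0 → z ≤ z₂)
    (a : ℕ → ℝ) (ha0 : a 0 = k) (ha : ∀ n, a (n + 1) = k - (a n) ^ (-α)) :
    (∀ n, a (n + 1) ≤ a n) ∧ (∀ n, z₂ ≤ a n) ∧
      Filter.Tendsto a Filter.atTop (nhds z₂) := by
  set f : ℝ → ℝ := fun x => k - x ^ (-α)
  have ha_iter : a = fun n => f^[n] k := funext fun n => by
    induction n with
    | zero => exact ha0
    | succ n ih => rw [ha, ih, iterate_succ_apply']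
  have hfz₂ : f z₂ = z₂ := (rpow_add_one_sub_mul_rpow_add_one_eq_zero_iff hz₂pos).1 hz₂root
  have hmono : MonotoneOn f (Ici z₂) :=
    (monotoneOn_const_sub_rpow_neg hα.le).mono fun _ hx => hz₂pos.trans_le hx
  have hmaps : MapsTo f (Ici z₂) (Ici z₂) := fun x hx =>
    hfz₂ ▸ hmono self_mem_Ici hx (mem_Ici.1 hx)
  have hz₂k : z₂ ≤ k := hfz₂ ▸ sub_le_self k (Real.rpow_pos_of_pos hz₂pos _).le
  have hfk : f k ≤ k := sub_le_self k (Real.rpow_pos_of_pos (hz₂pos.trans_le hz₂k) _).le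
  have hanti := hmono.antitone_iterate_of_map_le hmaps hz₂k hfk
  have hlb : ∀ n, z₂ ≤ f^[n] k := fun n => hmaps.iterate n hz₂k
  obtain ⟨L, hz₂L, hfL, hlim⟩ := exists_isFixedPt_tendsto_iterate_of_antitone hanti hlb
    fun y hy => continuousAt_const_sub_rpow_neg (hz₂pos.trans_le hy).ne'
  have hL0 : 0 < L := hz₂pos.trans_le hz₂L
  have hLz₂ : L = z₂ :=
    (hz₂max L hL0 ((rpow_add_one_sub_mul_rpow_add_one_eq_zero_iff hL0).2 hfL)).antisymm hz₂L
  subst ha_iter hLz₂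
  exact ⟨fun n => hanti n.le_succ, hlb, hlim⟩

theorem stmt_7 (α k z₂ : ℝ) (hα : 0 < α)
    (hk : (α + 1) * α ^ (-(α / (α + 1))) < k)
    (hz₂pos : 0 < z₂) (hz₂root : z₂ ^ (α + 1) - k * z₂ ^ α + 1 = 0)
    (hz₂max : ∀ z : ℝ, 0 < z → z ^ (α + 1) - k * z ^ α + 1 = 0 → z ≤ z₂)
    (a : ℕ → ℝ) (ha0 : a 0 = k) (ha : ∀ n, a (n + 1) = k - (a n) ^ (-α)) :
    (∀ n, a (n + 1) ≤ a n) ∧ (∀ n, z₂ ≤ a n) ∧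
      Filter.Tendsto a Filter.atTop (nhds z₂) :=
  stmt_7_general α k z₂ hα hz₂pos hz₂root hz₂max a ha0 ha
end

section
/- Let α > 0, τ > 0, f₁, f continuous on [0,τ) with f(0) > f₁(0), f − f₁ nondecreasing on [0,τ), and g, g₁ ∈ L¹_loc with g ≥ g₁ a.e. on (0,τ). Suppose x, x₁ : [0,τ) → (0,∞) are continuous with x(t) = f(t) + ∫₀ᵗ g(s)/x(s)^α ds and x₁(t) = f₁(t) + ∫₀ᵗ g₁(s)/x₁(s)^α ds for all t ∈ [0,τ), where both integrands are locally integrable on (0,τ). Then x(t) > x₁(t) for all t ∈ [0,τ). -/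
open MeasureTheory intervalIntegral Set

/-! Suppose `x₁ t ≥ x t` somewhere and let `T` be the first zero of `z = x - x₁`, which is
positive at `0`. For `c ≤ T`, subtracting the equations at `c` and `T` and using that `f - f₁` is
nondecreasing and `g₁ ≤ g` gives `z c ≤ ∫_c^T g₁ (x₁^(-α) - x^(-α))`, hence
`z c ≤ ∫_c^T C |g₁| z` with `C` the Lipschitz constant of `y ↦ y^(-α)` above `min x₁`.
Since `∫_c^T |g₁| → 0` as `c → T`, taking `c` at a maximum of `z` on a short interval `[t, T]`
shows `z ≤ 0` there, contradicting the choice of `T`. -/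

theorem abs_rpow_neg_sub_rpow_neg_le {α m a b : ℝ} (hα : 0 < α) (hm : 0 < m) (ha : m ≤ a)
    (hb : m ≤ b) : |a ^ (-α) - b ^ (-α)| ≤ α * m ^ (-α - 1) * |a - b| := by
  have hderiv : ∀ y ∈ Ici m, HasDerivWithinAt (fun y : ℝ => y ^ (-α)) (-α * y ^ (-α - 1))
      (Ici m) y := fun y hy =>
    (Real.hasDerivAt_rpow_const (Or.inl (hm.trans_le hy).ne')).hasDerivWithinAt
  have hbound : ∀ y ∈ Ici m, ‖-α * y ^ (-α - 1)‖ ≤ α * m ^ (-α - 1) := fun y hy => by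
    rw [Real.norm_eq_abs, abs_mul, abs_neg, abs_of_pos hα,
      abs_of_pos (Real.rpow_pos_of_pos (hm.trans_le hy) _)]
    exact mul_le_mul_of_nonneg_left (Real.rpow_le_rpow_of_nonpos hm hy (by linarith)) hα.le
  simpa only [Real.norm_eq_abs] using
    (convex_Ici m).norm_image_sub_le_of_norm_hasDerivWithin_le hderiv hbound hb ha

theorem div_rpow_sub_div_rpow_le {α m a b u v : ℝ} (hα : 0 < α) (hm : 0 < m) (hma : m ≤ a)
    (hab : a ≤ b) (huv : u ≤ v) :
    u / a ^ α - v / b ^ α ≤ α * m ^ (-α - 1) * |u| * (b - a) := by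
  have ha : 0 < a := hm.trans_le hma
  have hb : 0 < b := ha.trans_le hab
  calc u / a ^ α - v / b ^ α ≤ u / a ^ α - u / b ^ α := by
        gcongr
    _ = u * (a ^ (-α) - b ^ (-α)) := by
        rw [Real.rpow_neg ha.le, Real.rpow_neg hb.le]; ring
    _ ≤ |u| * |a ^ (-α) - b ^ (-α)| := by rw [← abs_mul]; exact le_abs_self _
    _ ≤ |u| * (α * m ^ (-α - 1) * |a - b|) :=
        mul_le_mul_of_nonneg_left (abs_rpow_neg_sub_rpow_neg_le hα hm hma (hma.trans hab))
          (abs_nonneg u)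
    _ = α * m ^ (-α - 1) * |u| * (b - a) := by
        rw [abs_sub_comm, abs_of_nonneg (sub_nonneg.2 hab)]; ring

theorem IntervalIntegrable.of_div_of_continuousOn {f h : ℝ → ℝ} {a b : ℝ}
    (hfh : IntervalIntegrable (fun s => f s / h s) volume a b) (hh : ContinuousOn h (uIcc a b))
    (hh0 : ∀ s ∈ uIcc a b, h s ≠ 0) : IntervalIntegrable f volume a b :=
  (hfh.mul_continuousOn hh).congr fun s hs => div_mul_cancel₀ _ (hh0 s (uIoc_subset_uIcc hs))

theorem ContinuousOn.exists_first_zero {z : ℝ → ℝ} {a b : ℝ} (hz : ContinuousOn z (Icc a b))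
    (hab : a ≤ b) (ha : 0 < z a) (hb : z b ≤ 0) :
    ∃ T ∈ Ioc a b, z T = 0 ∧ ∀ s ∈ Ico a T, 0 < z s := by
  have hzero : ∀ s ∈ Icc a b, z s ≤ 0 → ∃ r ∈ Icc a s, z r = 0 := fun s hs hzs =>
    intermediate_value_Icc' hs.1 (hz.mono (Icc_subset_Icc_right hs.2)) ⟨hzs, ha.le⟩
  set S := Icc a b ∩ z ⁻¹' {0}
  have hbdd : BddBelow S := ⟨a, fun s hs => hs.1.1⟩
  obtain ⟨r, hr, hzr⟩ := hzero b ⟨hab, le_rfl⟩ hb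
  have hT : sInf S ∈ S :=
    (hz.preimage_isClosed_of_isClosed isClosed_Icc isClosed_singleton).csInf_mem
      ⟨r, ⟨hr.1, hr.2⟩, hzr⟩ hbdd
  refine ⟨sInf S, ⟨hT.1.1.lt_of_ne ?_, hT.1.2⟩, hT.2, fun s hs => ?_⟩
  · rintro hTa
    exact ha.ne' (hTa ▸ hT.2)
  by_contra! hzs
  obtain ⟨r, hr, hzr⟩ := hzero s ⟨hs.1, hs.2.le.trans hT.1.2⟩ hzs
  exact (csInf_le hbdd ⟨⟨hr.1, hr.2.trans (hs.2.le.trans hT.1.2)⟩, hzr⟩).not_gt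
    (hr.2.trans_lt hs.2)

-- A backward integral Grönwall inequality, localised at `T`.
theorem exists_Icc_nonpos_of_le_integral_mul {z k : ℝ → ℝ} {a T : ℝ} (haT : a < T)
    (hz : ContinuousOn z (Icc a T)) (hk : IntervalIntegrable k volume a T) (hk0 : ∀ s, 0 ≤ k s)
    (hle : ∀ c ∈ Icc a T, z c ≤ ∫ s in c..T, k s * z s) :
    ∃ t ∈ Ico a T, ∀ s ∈ Icc t T, z s ≤ 0 := by
  have htail : Filter.Tendsto (fun t => ∫ s in t..T, k s) (nhdsWithin T (Ico a T)) (nhds 0) := by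
    have hk' : IntegrableOn k (uIcc a T) volume := by
      rw [uIcc_of_le haT.le]; exact (intervalIntegrable_iff_integrableOn_Icc_of_le haT.le).1 hk
    have hcont : ContinuousWithinAt (fun t => ∫ s in t..T, k s) (Ico a T) T :=
      (continuousOn_primitive_interval_left hk' T right_mem_uIcc).mono
        (by rw [uIcc_of_le haT.le]; exact Ico_subset_Icc_self)
    simpa only [ContinuousWithinAt, integral_same] using hcont
  have : (nhdsWithin T (Ico a T)).NeBot := right_nhdsWithin_Ico_neBot haT
  obtain ⟨t, htail_lt, ht⟩ :=
    ((htail.eventually_lt_const one_pos).and self_mem_nhdsWithin).exists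
  obtain ⟨c, hc, hmax⟩ := isCompact_Icc.exists_isMaxOn (nonempty_Icc.2 ht.2.le)
    (hz.mono (Icc_subset_Icc_left ht.1))
  refine ⟨t, ht, fun s hs => (hmax hs).trans ?_⟩
  by_contra! hpos
  have hkt : IntervalIntegrable k volume t T :=
    hk.mono_set (uIcc_subset_uIcc_right (mem_uIcc_of_le ht.1 ht.2.le))
  have hkc : IntervalIntegrable k volume c T :=
    hkt.mono_set (uIcc_subset_uIcc_right (mem_uIcc_of_le hc.1 hc.2))
  have hzc : ContinuousOn z (uIcc c T) :=
    hz.mono (by rw [uIcc_of_le hc.2]; exact Icc_subset_Icc (ht.1.trans hc.1) le_rfl)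
  have hzc_le : z c ≤ z c * ∫ s in c..T, k s :=
    calc z c ≤ ∫ s in c..T, k s * z s := hle c ⟨ht.1.trans hc.1, hc.2⟩
      _ ≤ ∫ s in c..T, k s * z c :=
          integral_mono_on hc.2 (hkc.mul_continuousOn hzc) (hkc.mul_const _) fun s hs =>
            mul_le_mul_of_nonneg_left (hmax ⟨hc.1.trans hs.1, hs.2⟩) (hk0 s)
      _ = z c * ∫ s in c..T, k s := by rw [intervalIntegral.integral_mul_const, mul_comm]
  have htail_mono : ∫ s in c..T, k s ≤ ∫ s in t..T, k s :=
    integral_mono_interval hc.1 hc.2 le_rfl (Filter.Eventually.of_forall hk0) hkt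
  nlinarith

theorem sub_le_integral_of_volterra {α τ m c T : ℝ} {f f₁ g g₁ x x₁ : ℝ → ℝ} (hα : 0 < α)
    (hm : 0 < m) (hc : 0 ≤ c) (hcT : c ≤ T) (hTτ : T < τ)
    (hmono : MonotoneOn (fun t => f t - f₁ t) (Ico 0 τ))
    (hg : ∀ᵐ s ∂(volume : Measure ℝ), s ∈ Ioo 0 τ → g₁ s ≤ g s)
    (hint : ∀ t ∈ Ico (0:ℝ) τ, IntervalIntegrable (fun s => g s / x s ^ α) volume 0 t)
    (hint₁ : ∀ t ∈ Ico (0:ℝ) τ, IntervalIntegrable (fun s => g₁ s / x₁ s ^ α) volume 0 t)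
    (heq : ∀ t ∈ Ico (0:ℝ) τ, x t = f t + ∫ s in (0:ℝ)..t, g s / x s ^ α)
    (heq₁ : ∀ t ∈ Ico (0:ℝ) τ, x₁ t = f₁ t + ∫ s in (0:ℝ)..t, g₁ s / x₁ s ^ α)
    (hg₁ : IntervalIntegrable g₁ volume c T)
    (hx : ContinuousOn (fun s => x s - x₁ s) (Icc c T)) (hmx₁ : ∀ s ∈ Icc c T, m ≤ x₁ s)
    (hx₁x : ∀ s ∈ Icc c T, x₁ s ≤ x s) (hxT : x T ≤ x₁ T) :
    x c - x₁ c ≤ ∫ s in c..T, α * m ^ (-α - 1) * |g₁ s| * (x s - x₁ s) := by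
  have hcτ : c ∈ Ico 0 τ := ⟨hc, hcT.trans_lt hTτ⟩
  have hTτ' : T ∈ Ico 0 τ := ⟨hc.trans hcT, hTτ⟩
  have hI := (hint c hcτ).symm.trans (hint T hTτ')
  have hI₁ := (hint₁ c hcτ).symm.trans (hint₁ T hTτ')
  calc x c - x₁ c ≤ ∫ s in c..T, (g₁ s / x₁ s ^ α - g s / x s ^ α) := by
        rw [integral_sub hI₁ hI, ← integral_interval_sub_left (hint T hTτ') (hint c hcτ),
          ← integral_interval_sub_left (hint₁ T hTτ') (hint₁ c hcτ)]
        linarith [heq c hcτ, heq T hTτ', heq₁ c hcτ, heq₁ T hTτ', hmono hcτ hTτ' hcT]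
    _ ≤ ∫ s in c..T, α * m ^ (-α - 1) * |g₁ s| * (x s - x₁ s) := by
        refine integral_mono_ae_restrict hcT (hI₁.sub hI)
          ((hg₁.abs.const_mul _).mul_continuousOn (by rwa [uIcc_of_le hcT])) ?_
        rw [← Measure.restrict_congr_set Ioc_ae_eq_Icc]
        filter_upwards [ae_restrict_mem measurableSet_Ioc, ae_restrict_of_ae hg]
          with s hs hgs
        have hs' : s ∈ Icc c T := Ioc_subset_Icc_self hs
        exact div_rpow_sub_div_rpow_le hα hm (hmx₁ s hs') (hx₁x s hs')
          (hgs ⟨hc.trans_lt hs.1, hs.2.trans_lt hTτ⟩)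

theorem stmt_13_general (α τ : ℝ) (hα : 0 < α)
    (f f₁ g g₁ x x₁ : ℝ → ℝ)
    (hf0 : f₁ 0 < f 0)
    (hmono : MonotoneOn (fun t => f t - f₁ t) (Set.Ico 0 τ))
    (hg : ∀ᵐ s ∂(volume : Measure ℝ), s ∈ Set.Ioo 0 τ → g₁ s ≤ g s)
    (hx : ContinuousOn x (Set.Ico 0 τ)) (hx₁ : ContinuousOn x₁ (Set.Ico 0 τ))
    (hx₁pos : ∀ t ∈ Set.Ico (0:ℝ) τ, 0 < x₁ t)
    (hint : ∀ t ∈ Set.Ico (0:ℝ) τ,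
      IntervalIntegrable (fun s => g s / x s ^ α) volume 0 t)
    (hint₁ : ∀ t ∈ Set.Ico (0:ℝ) τ,
      IntervalIntegrable (fun s => g₁ s / x₁ s ^ α) volume 0 t)
    (heq : ∀ t ∈ Set.Ico (0:ℝ) τ,
      x t = f t + ∫ s in (0:ℝ)..t, g s / x s ^ α)
    (heq₁ : ∀ t ∈ Set.Ico (0:ℝ) τ,
      x₁ t = f₁ t + ∫ s in (0:ℝ)..t, g₁ s / x₁ s ^ α) :
    ∀ t ∈ Set.Ico (0:ℝ) τ, x₁ t < x t := by
  intro t ht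
  by_contra! hxt
  have hz : ContinuousOn (fun s => x s - x₁ s) (Ico 0 τ) := hx.sub hx₁
  have hz0 : 0 < x 0 - x₁ 0 := by
    have h0 : (0:ℝ) ∈ Ico 0 τ := ⟨le_rfl, ht.1.trans_lt ht.2⟩
    rw [heq 0 h0, heq₁ 0 h0, integral_same, integral_same]
    linarith
  obtain ⟨T, hT, hzT, hpos⟩ :=
    (hz.mono (Icc_subset_Ico_right ht.2)).exists_first_zero ht.1 hz0 (sub_nonpos.2 hxt)
  have hTτ : Icc 0 T ⊆ Ico 0 τ := Icc_subset_Ico_right (hT.2.trans_lt ht.2)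
  have hx₁x : ∀ s ∈ Icc 0 T, x₁ s ≤ x s := fun s hs => by
    rcases hs.2.lt_or_eq with h | rfl
    · linarith [hpos s ⟨hs.1, h⟩]
    · linarith
  obtain ⟨p, hp, hmin⟩ :=
    isCompact_Icc.exists_isMinOn (nonempty_Icc.2 hT.1.le) (hx₁.mono hTτ)
  have hg₁ : IntervalIntegrable g₁ volume 0 T := by
    refine (hint₁ T (hTτ ⟨hT.1.le, le_rfl⟩)).of_div_of_continuousOn ?_ fun s hs => ?_
    · rw [uIcc_of_le hT.1.le]
      exact (hx₁.mono hTτ).rpow_const fun _ _ => Or.inr hα.le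
    · rw [uIcc_of_le hT.1.le] at hs
      exact (Real.rpow_pos_of_pos (hx₁pos s (hTτ hs)) α).ne'
  have hm : 0 < x₁ p := hx₁pos p (hTτ hp)
  obtain ⟨c, hc, hzc⟩ := exists_Icc_nonpos_of_le_integral_mul hT.1 (hz.mono hTτ)
    (hg₁.abs.const_mul (α * x₁ p ^ (-α - 1))) (fun s => by positivity) fun c hc => by
      have hcT : Icc c T ⊆ Icc 0 T := Icc_subset_Icc_left hc.1
      exact sub_le_integral_of_volterra hα hm hc.1 hc.2 (hT.2.trans_lt ht.2) hmono hg hint hint₁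
        heq heq₁ (hg₁.mono_set (uIcc_subset_uIcc_right (mem_uIcc_of_le hc.1 hc.2)))
        (hz.mono (hcT.trans hTτ)) (fun s hs => hmin (hcT hs)) (fun s hs => hx₁x s (hcT hs))
        (sub_eq_zero.1 hzT).le
  exact (hpos c ⟨hc.1, hc.2⟩).not_ge (hzc c ⟨le_rfl, hc.2.le⟩)

theorem stmt_13 (α τ : ℝ) (hα : 0 < α) (hτ : 0 < τ)
    (f f₁ g g₁ x x₁ : ℝ → ℝ)
    (hf : ContinuousOn f (Set.Ico 0 τ)) (hf₁ : ContinuousOn f₁ (Set.Ico 0 τ))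
    (hf0 : f₁ 0 < f 0)
    (hmono : MonotoneOn (fun t => f t - f₁ t) (Set.Ico 0 τ))
    (hg : ∀ᵐ s ∂(volume : Measure ℝ), s ∈ Set.Ioo 0 τ → g₁ s ≤ g s)
    (hx : ContinuousOn x (Set.Ico 0 τ)) (hx₁ : ContinuousOn x₁ (Set.Ico 0 τ))
    (hxpos : ∀ t ∈ Set.Ico (0:ℝ) τ, 0 < x t)
    (hx₁pos : ∀ t ∈ Set.Ico (0:ℝ) τ, 0 < x₁ t)
    (hint : ∀ t ∈ Set.Ico (0:ℝ) τ,
      IntervalIntegrable (fun s => g s / x s ^ α) volume 0 t)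
    (hint₁ : ∀ t ∈ Set.Ico (0:ℝ) τ,
      IntervalIntegrable (fun s => g₁ s / x₁ s ^ α) volume 0 t)
    (heq : ∀ t ∈ Set.Ico (0:ℝ) τ,
      x t = f t + ∫ s in (0:ℝ)..t, g s / x s ^ α)
    (heq₁ : ∀ t ∈ Set.Ico (0:ℝ) τ,
      x₁ t = f₁ t + ∫ s in (0:ℝ)..t, g₁ s / x₁ s ^ α) :
    ∀ t ∈ Set.Ico (0:ℝ) τ, x₁ t < x t :=
  stmt_13_general α τ hα f f₁ g g₁ x x₁ hf0 hmono hg hx hx₁ hx₁pos hint hint₁ heq heq₁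
end

section
/- Let α > 0, k > k₀ := (α+1)·α^(−α/(α+1)), and let z₁ be the smaller positive root of z^(α+1) − k·z^α + 1 = 0. Then γ := α(k − z₁)/z₁ − 1 > 0. -/
/-!
The derivative of `P(z) = z^(α+1) - k z^α + 1` vanishes at `m = α k / (α + 1)`, and writing
`u = k / (α + 1)` one finds `P(m) = 1 - α^α u^(α+1)`, which is negative exactly when `k > k₀`.
Since `P(0) = 1`, the intermediate value theorem gives a root in `(0, m)`, so the smallest
positive root satisfies `z₁ < m`, which rearranges to `α (k - z₁) / z₁ > 1`.
-/

open Real Set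

noncomputable def pPlus (α k z : ℝ) : ℝ := z ^ (α + 1) - k * z ^ α + 1

section

variable {α : ℝ}

theorem continuous_pPlus (hα : 0 ≤ α) (k : ℝ) : Continuous (pPlus α k) := by
  unfold pPlus
  have := continuous_rpow_const hα
  have := continuous_rpow_const (show 0 ≤ α + 1 by linarith)
  fun_prop

theorem pPlus_zero (hα : 0 < α) (k : ℝ) : pPlus α k 0 = 1 := by
  simp [pPlus, zero_rpow hα.ne', zero_rpow (show α + 1 ≠ 0 by linarith)]

theorem pPlus_critical (hα : 0 < α) {k : ℝ} (hk : 0 < k) :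
    pPlus α k (α * k / (α + 1)) = 1 - α ^ α * (k / (α + 1)) ^ (α + 1) := by
  set u := k / (α + 1) with hu
  have hu0 : 0 < u := by positivity
  have hm : α * k / (α + 1) = α * u := by rw [hu, mul_div_assoc]
  have hk : k = (α + 1) * u := by rw [hu]; field_simp
  rw [pPlus, hm, rpow_add_one (by positivity), rpow_add_one hu0.ne', mul_rpow hα.le hu0.le, hk]
  ring

theorem one_lt_rpow_mul_rpow_add_one (hα : 0 < α) {u : ℝ} (hu : α ^ (-(α / (α + 1))) < u) :
    1 < α ^ α * u ^ (α + 1) := by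
  have hα1 : 0 < α + 1 := by linarith
  have hpow := rpow_lt_rpow (by positivity) hu hα1
  rw [← rpow_mul hα.le, neg_mul, div_mul_cancel₀ α hα1.ne', rpow_neg hα.le] at hpow
  calc 1 = α ^ α * (α ^ α)⁻¹ := (mul_inv_cancel₀ (by positivity)).symm
    _ < α ^ α * u ^ (α + 1) := by gcongr

theorem pPlus_critical_neg (hα : 0 < α) {k : ℝ} (hk : (α + 1) * α ^ (-(α / (α + 1))) < k) :
    pPlus α k (α * k / (α + 1)) < 0 := by
  have hα1 : 0 < α + 1 := by linarith
  have hk0 : 0 < k := lt_of_le_of_lt (by positivity) hk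
  have hu : α ^ (-(α / (α + 1))) < k / (α + 1) := by rwa [lt_div_iff₀ hα1, mul_comm]
  rw [pPlus_critical hα hk0]
  linarith [one_lt_rpow_mul_rpow_add_one hα hu]

theorem exists_pPlus_root_lt_critical (hα : 0 < α) {k : ℝ}
    (hk : (α + 1) * α ^ (-(α / (α + 1))) < k) :
    ∃ c, 0 < c ∧ c < α * k / (α + 1) ∧ pPlus α k c = 0 := by
  have hneg := pPlus_critical_neg hα hk
  have hm : 0 ≤ α * k / (α + 1) := by
    have : 0 < k := lt_of_le_of_lt (by positivity) hk
    positivity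
  obtain ⟨c, ⟨hc0, hcm⟩, hc⟩ := intermediate_value_Icc' hm
    (continuous_pPlus hα.le k).continuousOn ⟨hneg.le, by rw [pPlus_zero hα]; exact zero_le_one⟩
  refine ⟨c, hc0.lt_of_ne ?_, hcm.lt_of_ne ?_, hc⟩
  · rintro rfl
    simp [pPlus_zero hα] at hc
  · rintro rfl
    exact hneg.ne hc

end

theorem stmt_15_general (α k z₁ : ℝ) (hα : 0 < α)
    (hk : (α + 1) * α ^ (-(α / (α + 1))) < k)
    (hz₁pos : 0 < z₁)
    (hz₁min : ∀ z : ℝ, 0 < z → z ^ (α + 1) - k * z ^ α + 1 = 0 → z₁ ≤ z) :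
    0 < α * (k - z₁) / z₁ - 1 := by
  obtain ⟨c, hc0, hcm, hc⟩ := exists_pPlus_root_lt_critical hα hk
  have hz₁m : z₁ < α * k / (α + 1) := (hz₁min c hc0 hc).trans_lt hcm
  rw [lt_div_iff₀ (by linarith)] at hz₁m
  rw [sub_pos, one_lt_div hz₁pos]
  linarith

theorem stmt_15 (α k z₁ : ℝ) (hα : 0 < α)
    (hk : (α + 1) * α ^ (-(α / (α + 1))) < k)
    (hz₁pos : 0 < z₁) (hz₁root : z₁ ^ (α + 1) - k * z₁ ^ α + 1 = 0)
    (hz₁min : ∀ z : ℝ, 0 < z → z ^ (α + 1) - k * z ^ α + 1 = 0 → z₁ ≤ z) :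
    0 < α * (k - z₁) / z₁ - 1 :=
  stmt_15_general α k z₁ hα hk hz₁pos hz₁min
end

section
/- Let α > 0, σ > 0 and Λ₁ ≥ 0 with σ > k₀·Λ₁^(1/(α+1)) where k₀ = (α+1)·α^(−α/(α+1)). Let ν be the largest positive root of z^(α+1) − σ·z^α + Λ₁ = 0 (with ν = σ if Λ₁ = 0). Then α·Λ₁/ν^(α+1) < 1, i.e. α(σ − ν)/ν < 1. -/
/-!
On `z > 0` we have `Q(z) = Λ₁ - z^α (σ - z)`, and `z^α (σ - z)` peaks at `s = σα/(α+1)` with value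
`s^(α+1)/α`. The hypothesis on `σ` says exactly `αΛ₁ < s^(α+1)`, so `Q(s) < 0 ≤ Λ₁ = Q(σ)`, and the
intermediate value theorem yields a root in `(s, σ]`. Hence the largest root satisfies `ν > s`,
i.e. `α(σ - ν) < ν`, and `Λ₁ = ν^α (σ - ν)` turns this into `αΛ₁ < ν^(α+1)`.
-/

open Real Set

noncomputable def Q (α σ Λ z : ℝ) : ℝ := z ^ (α + 1) - σ * z ^ α + Λ

lemma Q_eq_sub_rpow_mul {α σ Λ z : ℝ} (hz : 0 < z) : Q α σ Λ z = Λ - z ^ α * (σ - z) := by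
  rw [Q, rpow_add_one hz.ne']
  ring

lemma Q_critical {α σ Λ : ℝ} (hα : 0 < α) (hσ : 0 < σ) :
    Q α σ Λ (σ * α / (α + 1)) = Λ - (σ * α / (α + 1)) ^ (α + 1) / α := by
  have hs : 0 < σ * α / (α + 1) := by positivity
  rw [Q_eq_sub_rpow_mul hs, rpow_add_one hs.ne']
  field_simp
  ring

lemma continuousOn_Q (α σ Λ : ℝ) : ContinuousOn (Q α σ Λ) (Ioi 0) := by
  have hne (p : ℝ) : ∀ z ∈ Ioi (0 : ℝ), z ≠ 0 ∨ 0 ≤ p := fun z hz => .inl (ne_of_gt hz)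
  exact ((continuousOn_id.rpow_const (hne _)).sub
    (continuousOn_const.mul (continuousOn_id.rpow_const (hne _)))).add continuousOn_const

lemma mul_lt_rpow_succ_of_lt {α σ Λ : ℝ} (hα : 0 < α) (hΛ : 0 ≤ Λ)
    (h : (α + 1) * α ^ (-(α / (α + 1))) * Λ ^ (1 / (α + 1)) < σ) :
    α * Λ < (σ * α / (α + 1)) ^ (α + 1) := by
  have hα1 : 0 < α + 1 := by linarith
  have hlhs : (α + 1) * α ^ (-(α / (α + 1))) * Λ ^ (1 / (α + 1))
      = (α + 1) / α * (α * Λ) ^ (α + 1)⁻¹ := by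
    have hexp : -(α / (α + 1)) = (α + 1)⁻¹ - 1 := by field_simp; ring
    rw [mul_rpow hα.le hΛ, hexp, rpow_sub hα, rpow_one, one_div]
    field_simp
  rw [hlhs, ← lt_div_iff₀' (div_pos hα1 hα), div_div_eq_mul_div] at h
  have hαΛ : 0 ≤ α * Λ := by positivity
  exact (rpow_inv_lt_iff_of_pos hαΛ ((rpow_nonneg hαΛ _).trans h.le) hα1).mp h

lemma exists_Q_eq_zero_mem_Ioc {α σ Λ : ℝ} (hα : 0 < α) (hσ : 0 < σ) (hΛ : 0 ≤ Λ)
    (h : α * Λ < (σ * α / (α + 1)) ^ (α + 1)) :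
    ∃ c ∈ Ioc (σ * α / (α + 1)) σ, Q α σ Λ c = 0 := by
  set s := σ * α / (α + 1) with hs_def
  have hs : 0 < s := by positivity
  have hsσ : s ≤ σ := by
    rw [hs_def, div_le_iff₀ (by linarith)]
    nlinarith
  have hQs : Q α σ Λ s < 0 := by
    rw [Q_critical hα hσ, sub_neg, lt_div_iff₀ hα]
    linarith
  have hQσ : Q α σ Λ σ = Λ := by
    rw [Q_eq_sub_rpow_mul hσ]
    ring
  have hcont : ContinuousOn (Q α σ Λ) (Icc s σ) :=
    (continuousOn_Q α σ Λ).mono fun z hz => hs.trans_le hz.1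
  exact intermediate_value_Ioc hsσ hcont ⟨hQs, hQσ.symm ▸ hΛ⟩

theorem stmt_16_general (α σ Λ₁ ν : ℝ) (hα : 0 < α) (hΛ₁ : 0 ≤ Λ₁)
    (hσΛ : (α + 1) * α ^ (-(α / (α + 1))) * Λ₁ ^ (1 / (α + 1)) < σ)
    (hνroot : ν ^ (α + 1) - σ * ν ^ α + Λ₁ = 0)
    (hνmax : ∀ z : ℝ, 0 < z → z ^ (α + 1) - σ * z ^ α + Λ₁ = 0 → z ≤ ν) :
    α * Λ₁ / ν ^ (α + 1) < 1 ∧ α * (σ - ν) / ν < 1 := by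
  have hk : 0 ≤ (α + 1) * α ^ (-(α / (α + 1))) * Λ₁ ^ (1 / (α + 1)) := by positivity
  have hσ : 0 < σ := hk.trans_lt hσΛ
  have hs : 0 < σ * α / (α + 1) := by positivity
  obtain ⟨c, ⟨hsc, -⟩, hQc⟩ :=
    exists_Q_eq_zero_mem_Ioc hα hσ hΛ₁ (mul_lt_rpow_succ_of_lt hα hΛ₁ hσΛ)
  have hsν : σ * α / (α + 1) < ν := hsc.trans_le (hνmax c (hs.trans hsc) hQc)
  have hν : 0 < ν := hs.trans hsν
  have hlt : α * (σ - ν) < ν := by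
    rw [div_lt_iff₀ (by linarith)] at hsν
    linarith
  have hΛν : Λ₁ = ν ^ α * (σ - ν) := by
    have := Q_eq_sub_rpow_mul (α := α) (σ := σ) (Λ := Λ₁) hν
    rw [Q, hνroot] at this
    linarith
  have hratio : α * Λ₁ / ν ^ (α + 1) = α * (σ - ν) / ν := by
    rw [hΛν, rpow_add_one hν.ne']
    field_simp
  rw [hratio, and_self, div_lt_one hν]
  exact hlt

theorem stmt_16 (α σ Λ₁ ν : ℝ) (hα : 0 < α) (hσ : 0 < σ) (hΛ₁ : 0 ≤ Λ₁)
    (hσΛ : (α + 1) * α ^ (-(α / (α + 1))) * Λ₁ ^ (1 / (α + 1)) < σ)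
    (hνpos : 0 < ν) (hνroot : ν ^ (α + 1) - σ * ν ^ α + Λ₁ = 0)
    (hνmax : ∀ z : ℝ, 0 < z → z ^ (α + 1) - σ * z ^ α + Λ₁ = 0 → z ≤ ν) :
    α * Λ₁ / ν ^ (α + 1) < 1 ∧ α * (σ - ν) / ν < 1 :=
  stmt_16_general α σ Λ₁ ν hα hΛ₁ hσΛ hνroot hνmax
end
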